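/- arXiv:2510.06707 — 6 statements merged into one kernel-verified Lean document; each statement's English description precedes it below -/
import Mathlib

section
/- The n-th root of the (n − ⌊√n⌋)-th Motzkin number converges to 3; i.e. Filter.Tendsto (fun n : ℕ => ((∑ t in Finset.range (n - Nat.sqrt n + 1), (n - Nat.sqrt n).choose (2*t) * catalan t : ℕ) : ℝ) ^ ((n : ℝ)⁻¹)) Filter.atTop (nhds 3). -/
/-!
Pairing the terms of `3 ^ m = ∑ k, C(m, k) 2 ^ k` as `k = 2t, 2t + 1`, the odd term is at most
`2m` times the even one, and the even term `C(m, 2t) 4 ^ t` lies between `C(m, 2t) catalan t` and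
`(2m + 1) ^ 2 C(m, 2t) catalan t` because `catalan t = C(2t, t) / (t + 1)`. Hence
`3 ^ m / (2m + 1) ^ 3 ≤ motzkin m ≤ 3 ^ m`, so `motzkin m ^ (1 / m) → 3`. For `m = n - ⌊√n⌋` we
have `m / n → 1`, and `motzkin m ^ (1 / n) = (motzkin m ^ (1 / m)) ^ (m / n) → 3 ^ 1`.
-/

open Finset Filter Topology

def motzkin (m : ℕ) : ℕ := ∑ t ∈ range (m + 1), m.choose (2 * t) * catalan t

theorem sum_range_two_mul {M : Type*} [AddCommMonoid M] (f : ℕ → M) (N : ℕ) :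
    ∑ k ∈ range (2 * N), f k = ∑ t ∈ range N, (f (2 * t) + f (2 * t + 1)) := by
  induction N with
  | zero => simp
  | succ N ih => rw [mul_add_one, sum_range_succ, sum_range_succ, sum_range_succ, ih, add_assoc]

theorem sum_range_two_mul_choose_mul_two_pow (m : ℕ) :
    ∑ k ∈ range (2 * (m + 1)), m.choose k * 2 ^ k = 3 ^ m := by
  have hzero : ∀ k ∈ range (2 * (m + 1)), k ∉ range (m + 1) → m.choose k * 2 ^ k = 0 :=
    fun k _ hk => by rw [Nat.choose_eq_zero_of_lt (by simpa using hk), zero_mul]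
  rw [← sum_subset (range_subset_range.mpr (by omega)) hzero, show 3 = 2 + 1 from rfl, add_pow]
  simp [mul_comm]

theorem catalan_le_four_pow (t : ℕ) : catalan t ≤ 4 ^ t :=
  calc catalan t ≤ (t + 1) * catalan t := Nat.le_mul_of_pos_left _ t.succ_pos
    _ = t.centralBinom := succ_mul_catalan_eq_centralBinom t
    _ ≤ 4 ^ t := Nat.centralBinom_le_four_pow t

theorem four_pow_le_mul_catalan (t : ℕ) : 4 ^ t ≤ (2 * t + 1) * (t + 1) * catalan t := by
  rw [mul_assoc, succ_mul_catalan_eq_centralBinom]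
  exact Nat.four_pow_le_two_mul_add_one_mul_central_binom t

theorem choose_succ_le_mul_choose (m k : ℕ) : m.choose (k + 1) ≤ m * m.choose k :=
  calc m.choose (k + 1) ≤ m.choose (k + 1) * (k + 1) := Nat.le_mul_of_pos_right _ k.succ_pos
    _ = m.choose k * (m - k) := Nat.choose_succ_right_eq m k
    _ ≤ m * m.choose k := by rw [mul_comm]; exact Nat.mul_le_mul_right _ (Nat.sub_le m k)

theorem motzkin_le_three_pow (m : ℕ) : motzkin m ≤ 3 ^ m := by
  rw [← sum_range_two_mul_choose_mul_two_pow, sum_range_two_mul, motzkin]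
  gcongr with t
  calc m.choose (2 * t) * catalan t ≤ m.choose (2 * t) * 2 ^ (2 * t) := by
        rw [pow_mul]; exact Nat.mul_le_mul_left _ (catalan_le_four_pow t)
    _ ≤ _ := Nat.le_add_right _ _

theorem three_pow_le_motzkin (m : ℕ) : 3 ^ m ≤ (2 * m + 1) ^ 3 * motzkin m := by
  rw [← sum_range_two_mul_choose_mul_two_pow, sum_range_two_mul, motzkin, mul_sum]
  gcongr with t ht
  have htm : t ≤ m := by simpa [Nat.lt_succ_iff] using ht
  have hodd : m.choose (2 * t + 1) * 2 ^ (2 * t + 1) ≤ 2 * m * (m.choose (2 * t) * 2 ^ (2 * t)) :=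
    calc m.choose (2 * t + 1) * 2 ^ (2 * t + 1) ≤ m * m.choose (2 * t) * 2 ^ (2 * t + 1) :=
          Nat.mul_le_mul_right _ (choose_succ_le_mul_choose m (2 * t))
      _ = _ := by ring
  have heven : 2 ^ (2 * t) ≤ (2 * m + 1) ^ 2 * catalan t :=
    calc 2 ^ (2 * t) = 4 ^ t := by rw [pow_mul]; norm_num
      _ ≤ (2 * t + 1) * (t + 1) * catalan t := four_pow_le_mul_catalan t
      _ ≤ (2 * m + 1) ^ 2 * catalan t := by gcongr; nlinarith
  calc m.choose (2 * t) * 2 ^ (2 * t) + m.choose (2 * t + 1) * 2 ^ (2 * t + 1)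
      ≤ (2 * m + 1) * (m.choose (2 * t) * 2 ^ (2 * t)) := by linarith
    _ ≤ (2 * m + 1) * (m.choose (2 * t) * ((2 * m + 1) ^ 2 * catalan t)) := by gcongr
    _ = _ := by ring

theorem tendsto_rpow_inv_of_le_pow_of_pow_le_mul {a e : ℕ → ℝ} {c : ℝ} (hc : 0 ≤ c)
    (he : ∀ k, 0 < e k) (hup : ∀ k, a k ≤ c ^ k) (hlow : ∀ k, c ^ k ≤ e k * a k)
    (he1 : Tendsto (fun k => e k ^ (k : ℝ)⁻¹) atTop (𝓝 1)) :
    Tendsto (fun k => a k ^ (k : ℝ)⁻¹) atTop (𝓝 c) := by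
  have ha : ∀ k, 0 ≤ a k := fun k =>
    nonneg_of_mul_nonneg_right ((pow_nonneg hc k).trans (hlow k)) (he k)
  have hroot : ∀ k : ℕ, k ≠ 0 → (c ^ k) ^ (k : ℝ)⁻¹ = c := fun k hk =>
    Real.pow_rpow_inv_natCast hc hk
  have hlim : Tendsto (fun k => c / e k ^ (k : ℝ)⁻¹) atTop (𝓝 c) := by
    have := (tendsto_const_nhds (x := c)).div he1 one_ne_zero
    rwa [div_one] at this
  refine tendsto_of_tendsto_of_tendsto_of_le_of_le' hlim tendsto_const_nhds ?_ ?_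
  all_goals filter_upwards [eventually_ne_atTop 0] with k hk
  · rw [div_le_iff₀' (Real.rpow_pos_of_pos (he k) _), ← Real.mul_rpow (he k).le (ha k),
      ← hroot k hk]
    exact Real.rpow_le_rpow (by positivity) (hlow k) (by positivity)
  · rw [← hroot k hk]
    exact Real.rpow_le_rpow (ha k) (hup k) (by positivity)

theorem Filter.Tendsto.rpow_inv_comp {a : ℕ → ℝ} {c r : ℝ} {m : ℕ → ℕ} (ha : ∀ k, 0 ≤ a k)
    (hc : c ≠ 0) (h : Tendsto (fun k => a k ^ (k : ℝ)⁻¹) atTop (𝓝 c)) (hr : 0 < r)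
    (hmr : Tendsto (fun n => (m n : ℝ) / n) atTop (𝓝 r)) :
    Tendsto (fun n => a (m n) ^ (n : ℝ)⁻¹) atTop (𝓝 (c ^ r)) := by
  have hm : Tendsto m atTop atTop :=
    tendsto_natCast_atTop_iff.mp (tendsto_natCast_atTop_atTop.num hr hmr)
  refine ((h.comp hm).rpow hmr (Or.inl hc)).congr' ?_
  filter_upwards [hm.eventually_ne_atTop 0] with n hn
  rw [Function.comp_apply, ← Real.rpow_mul (ha _), inv_mul_eq_div,
    div_div_cancel_left' (by exact_mod_cast hn)]

theorem tendsto_natCast_rpow_inv : Tendsto (fun k : ℕ => (k : ℝ) ^ (k : ℝ)⁻¹) atTop (𝓝 1) := by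
  simpa [one_div, Function.comp_def] using tendsto_rpow_div.comp tendsto_natCast_atTop_atTop

theorem tendsto_two_mul_add_one_pow_rpow_inv (d : ℕ) :
    Tendsto (fun k : ℕ => ((2 * k + 1 : ℝ) ^ d) ^ (k : ℝ)⁻¹) atTop (𝓝 1) := by
  have hratio : Tendsto (fun k : ℕ => ((2 * k + 1 : ℕ) : ℝ) / k) atTop (𝓝 2) := by
    have := tendsto_const_nhds (x := (2 : ℝ)).add tendsto_one_div_atTop_nhds_zero_nat
    rw [add_zero] at this
    refine this.congr' ?_
    filter_upwards [eventually_ne_atTop 0] with k hk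
    field_simp
    push_cast; ring
  have := (tendsto_natCast_rpow_inv.rpow_inv_comp (fun k => k.cast_nonneg) one_ne_zero two_pos
    hratio).pow d
  simp only [Real.one_rpow, one_pow] at this
  refine this.congr fun k => ?_
  push_cast
  rw [Real.rpow_pow_comm (by positivity)]

theorem tendsto_sub_sqrt_div_self :
    Tendsto (fun n : ℕ => ((n - n.sqrt : ℕ) : ℝ) / n) atTop (𝓝 1) := by
  have hsqrt : Tendsto (fun n : ℕ => (n.sqrt : ℝ) / n) atTop (𝓝 0) := by
    have hinv : Tendsto (fun n : ℕ => (√(n : ℝ))⁻¹) atTop (𝓝 0) :=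
      tendsto_inv_atTop_zero.comp (Real.tendsto_sqrt_atTop.comp tendsto_natCast_atTop_atTop)
    refine squeeze_zero (fun n => by positivity) (fun n => ?_) hinv
    calc (n.sqrt : ℝ) / n ≤ √(n : ℝ) / n := by gcongr; exact Real.nat_sqrt_le_real_sqrt
      _ = (√(n : ℝ))⁻¹ := by rw [Real.sqrt_div_self', one_div]
  have := tendsto_const_nhds (x := (1 : ℝ)).sub hsqrt
  rw [sub_zero] at this
  refine this.congr' ?_
  filter_upwards [eventually_ne_atTop 0] with n hn
  rw [Nat.cast_sub n.sqrt_le_self]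
  field_simp

theorem tendsto_motzkin_rpow_inv : Tendsto (fun m => (motzkin m : ℝ) ^ (m : ℝ)⁻¹) atTop (𝓝 3) :=
  tendsto_rpow_inv_of_le_pow_of_pow_le_mul (e := fun m => (2 * m + 1 : ℝ) ^ 3) zero_le_three
    (fun m => by positivity) (fun m => by exact_mod_cast motzkin_le_three_pow m)
    (fun m => by exact_mod_cast three_pow_le_motzkin m) (tendsto_two_mul_add_one_pow_rpow_inv 3)

/-- The n-th root of the (n − ⌊√n⌋)-th Motzkin number converges to 3. -/
theorem motzkin_truncated_root_tendsto_three :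
    Filter.Tendsto
      (fun n : ℕ =>
        ((∑ t ∈ Finset.range (n - Nat.sqrt n + 1),
            (n - Nat.sqrt n).choose (2*t) * catalan t : ℕ) : ℝ) ^ ((n : ℝ)⁻¹))
      Filter.atTop (nhds 3) := by
  have h := tendsto_motzkin_rpow_inv.rpow_inv_comp (fun m => (motzkin m).cast_nonneg)
    three_ne_zero one_pos tendsto_sub_sqrt_div_self
  rwa [Real.rpow_one] at h
end

section
/- There exists a constant c > 0 such that for all sufficiently large n : ℕ, c * 3^n * (n : ℝ)^(-(3:ℝ)/2) ≤ ∑ t in Finset.range (n+1), ((Nat.sqrt n + 1 : ℝ) / (Nat.sqrt n + t + 1)) * (n.choose t) * ((n - t).choose (Nat.sqrt n + t)); i.e. the semisimple dimension of the cell of the Motzkin monoid Mo_n with ⌊√n⌋ through strands is bounded below by a quantity in Θ(n^{-3/2}·3^n). -/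
/-!
The sum is at least its term at the central index `t = ⌊(n - k)/3⌋`, `k = ⌊√n⌋`, where
`C(n,t) C(n-t,k+t) = n! / (t! (t+k)! (t+r)!)` is a trinomial coefficient whose three parts deviate
from `n/3` by `O(√n)`. Stirling's bounds `√(2πm) (m/e)^m ≤ m! ≤ e √m (m/e)^m` reduce it to
`a^a b^b c^c ≤ e³ (n/3)^n`, which holds because the relative entropy of `(a,b,c)/n` against the
uniform distribution is at most its chi-square distance, here `O(1/n)`. This gives a trinomial
coefficient of order `3^n / n`, and the prefactor `(k+1)/(k+t+1)` contributes another `n^{-1/2}`.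
-/

open Real Filter Finset Nat

theorem factorial_le_exp_one_mul_sqrt_mul {n : ℕ} (hn : n ≠ 0) :
    (n ! : ℝ) ≤ exp 1 * √n * (n / exp 1) ^ n := by
  obtain ⟨m, rfl⟩ := exists_eq_succ_of_ne_zero hn
  have hseq : Stirling.stirlingSeq (m + 1) ≤ exp 1 / √2 := by
    simpa [Stirling.stirlingSeq_one] using Stirling.stirlingSeq'_antitone (Nat.zero_le m)
  rw [Stirling.stirlingSeq, div_le_iff₀ (by positivity)] at hseq
  calc ((m + 1) ! : ℝ) ≤ exp 1 / √2 * (√(2 * (m + 1 : ℕ)) * ((m + 1 : ℕ) / exp 1) ^ (m + 1)) :=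
        hseq
    _ = exp 1 * √(m + 1 : ℕ) * ((m + 1 : ℕ) / exp 1) ^ (m + 1) := by
        rw [sqrt_mul zero_le_two]; field_simp

theorem mul_log_add_mul_log_add_mul_log_le {a b c n : ℝ} (ha : 0 < a) (hb : 0 < b) (hc : 0 < c)
    (hsum : a + b + c = n)
    (hdev : (a - n / 3) ^ 2 + (b - n / 3) ^ 2 + (c - n / 3) ^ 2 ≤ n) :
    a * log a + b * log b + c * log c ≤ n * log (n / 3) + 3 := by
  have hn : 0 < n := by linarith
  -- `log y ≤ y - 1` at `y = 3x/n` bounds the relative entropy by the chi-square distance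
  have single : ∀ x : ℝ, 0 < x → n * (x * log x) ≤ n * (x * log (n / 3)) + 3 * x ^ 2 - x * n := by
    intro x hx
    have hlog : log x = log (n / 3) + log (3 * x / n) := by
      rw [← log_mul (by positivity) (by positivity)]; congr 1; field_simp
    have hle := mul_le_mul_of_nonneg_left (log_le_sub_one_of_pos (show 0 < 3 * x / n by positivity))
      (show 0 ≤ x * n by positivity)
    rw [hlog]
    calc n * (x * (log (n / 3) + log (3 * x / n)))
        = n * (x * log (n / 3)) + x * n * log (3 * x / n) := by ring
      _ ≤ n * (x * log (n / 3)) + x * n * (3 * x / n - 1) := by linarith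
      _ = _ := by field_simp; ring
  have key : n * (a * log a + b * log b + c * log c) ≤ n * (n * log (n / 3) + 3) := by
    have hsq : 3 * (a ^ 2 + b ^ 2 + c ^ 2) - a * n - b * n - c * n ≤ 3 * n := by
      rw [← hsum] at hdev ⊢; nlinarith
    have hlin : n * (a * log (n / 3)) + n * (b * log (n / 3)) + n * (c * log (n / 3))
        = n * (n * log (n / 3)) := by rw [← hsum]; ring
    nlinarith [single a ha, single b hb, single c hc]
  exact le_of_mul_le_mul_left key hn

theorem pow_self_mul_pow_self_mul_pow_self_le {a b c n : ℕ} (ha : a ≠ 0) (hb : b ≠ 0) (hc : c ≠ 0)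
    (hsum : a + b + c = n)
    (hdev : ((a : ℝ) - n / 3) ^ 2 + ((b : ℝ) - n / 3) ^ 2 + ((c : ℝ) - n / 3) ^ 2 ≤ n) :
    (a : ℝ) ^ a * (b : ℝ) ^ b * (c : ℝ) ^ c ≤ exp 3 * ((n : ℝ) / 3) ^ n := by
  have hn : n ≠ 0 := by omega
  have hlog := mul_log_add_mul_log_add_mul_log_le (by positivity) (by positivity) (by positivity)
    (by exact_mod_cast hsum) hdev
  rw [← exp_le_exp, exp_add, exp_add, exp_add, exp_nat_mul, exp_nat_mul, exp_nat_mul,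
    exp_nat_mul, exp_log (by positivity), exp_log (by positivity), exp_log (by positivity),
    exp_log (by positivity)] at hlog
  linarith

theorem choose_mul_choose_eq_factorial_div {a b c n : ℕ} (hsum : a + b + c = n) :
    (n.choose a * (n - a).choose b : ℝ) = n ! / (a ! * b ! * c !) := by
  have h₁ := Nat.choose_mul_factorial_mul_factorial (show a ≤ n by omega)
  have h₂ := Nat.choose_mul_factorial_mul_factorial (show b ≤ n - a by omega)
  rw [show n - a - b = c by omega] at h₂
  rw [eq_div_iff (by positivity)]
  exact_mod_cast (by rw [← h₁, ← h₂, show n - a = b + c by omega]; ring :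
    n.choose a * (n - a).choose b * (a ! * b ! * c !) = n !)

theorem sqrt_two_pi_mul_three_pow_div_le_factorial_div {a b c n : ℕ} (ha : a ≠ 0) (hb : b ≠ 0)
    (hc : c ≠ 0) (hsum : a + b + c = n)
    (hdev : ((a : ℝ) - n / 3) ^ 2 + ((b : ℝ) - n / 3) ^ 2 + ((c : ℝ) - n / 3) ^ 2 ≤ n) :
    √(2 * π) * 3 ^ n / (exp 6 * n) ≤ n ! / (a ! * b ! * c ! : ℝ) := by
  have hn : (0 : ℝ) < n := by norm_cast; omega
  have hupper : (a ! * b ! * c ! : ℝ) ≤ exp 6 * (n * √n) * ((n : ℝ) / 3) ^ n / exp 1 ^ n :=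
    calc (a ! * b ! * c ! : ℝ)
        ≤ (exp 1 * √a * (a / exp 1) ^ a) * (exp 1 * √b * (b / exp 1) ^ b)
            * (exp 1 * √c * (c / exp 1) ^ c) := by
          gcongr <;> exact factorial_le_exp_one_mul_sqrt_mul ‹_›
      _ = exp 1 ^ 3 * (√a * √b * √c) * ((a : ℝ) ^ a * (b : ℝ) ^ b * (c : ℝ) ^ c) / exp 1 ^ n := by
          rw [div_pow, div_pow, div_pow, ← hsum, pow_add, pow_add]; field_simp
      _ ≤ exp 1 ^ 3 * (√n * √n * √n) * (exp 3 * ((n : ℝ) / 3) ^ n) / exp 1 ^ n := by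
          gcongr exp 1 ^ 3 * ?_ * ?_ / _
          · gcongr <;> omega
          · exact pow_self_mul_pow_self_mul_pow_self_le ha hb hc hsum hdev
      _ = exp 6 * (n * √n) * ((n : ℝ) / 3) ^ n / exp 1 ^ n := by
          rw [show exp 6 = exp 1 ^ 3 * exp 3 by rw [← exp_nat_mul, ← exp_add]; norm_num,
            mul_self_sqrt hn.le]
          ring
  calc √(2 * π) * 3 ^ n / (exp 6 * n)
      = √(2 * π * n) * (n / exp 1) ^ n / (exp 6 * (n * √n) * ((n : ℝ) / 3) ^ n / exp 1 ^ n) := by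
        rw [sqrt_mul (x := 2 * π) (by positivity), div_pow, div_pow]
        field_simp
    _ ≤ n ! / (a ! * b ! * c ! : ℝ) :=
        div_le_div₀ (by positivity) (Stirling.le_factorial_stirling n) (by positivity) hupper

theorem sq_sub_add_sq_sub_add_sq_sub_le {t k r n : ℕ} (hsum : 3 * t + k + r = n)
    (hk : k * k ≤ n) (hr : r ≤ 2) (hn : 8 ≤ n) :
    ((t : ℝ) - n / 3) ^ 2 + (((t + k : ℕ) : ℝ) - n / 3) ^ 2 + (((t + r : ℕ) : ℝ) - n / 3) ^ 2
      ≤ n := by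
  have hsumR : 3 * (t : ℝ) + k + r = n := by exact_mod_cast hsum
  have hkR : (k : ℝ) * k ≤ n := by exact_mod_cast hk
  have hrR : (r : ℝ) ≤ 2 := by exact_mod_cast hr
  have hnR : (8 : ℝ) ≤ n := by exact_mod_cast hn
  push_cast
  -- the left side equals `2 (k² - k r + r²) / 3`
  have hk₀ : (0 : ℝ) ≤ k := k.cast_nonneg
  have hr₀ : (0 : ℝ) ≤ r := r.cast_nonneg
  nlinarith [mul_nonneg hk₀ hr₀]

theorem sqrt_div_self_le_sqrt_add_one_div {n t : ℕ} (ht : Nat.sqrt n + t + 1 ≤ n) :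
    √n / n ≤ (Nat.sqrt n + 1 : ℝ) / (Nat.sqrt n + t + 1) :=
  div_le_div₀ (by positivity) real_sqrt_le_nat_sqrt_succ (by positivity) (by exact_mod_cast ht)

noncomputable def motzkinCellSummand (n t : ℕ) : ℝ :=
  ((Nat.sqrt n + 1 : ℝ) / ((Nat.sqrt n : ℝ) + (t : ℝ) + 1)) *
    (n.choose t : ℝ) * ((n - t).choose (Nat.sqrt n + t) : ℝ)

theorem motzkinCellSummand_nonneg (n t : ℕ) : 0 ≤ motzkinCellSummand n t := by
  unfold motzkinCellSummand; positivity

theorem le_motzkinCellSummand_central {n : ℕ} (hn : 16 ≤ n) :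
    √(2 * π) / exp 6 * 3 ^ n * (n : ℝ) ^ (-(3 : ℝ) / 2)
      ≤ motzkinCellSummand n ((n - Nat.sqrt n) / 3) := by
  set k := Nat.sqrt n
  set t := (n - k) / 3
  set r := (n - k) % 3
  have hkk : k * k ≤ n := Nat.sqrt_le n
  have hk : 4 * k ≤ n := (Nat.mul_le_mul_right k (Nat.le_sqrt.2 hn)).trans hkk
  have hr : r < 3 := Nat.mod_lt _ (by norm_num)
  have hsum₃ : 3 * t + k + r = n := by have := Nat.div_add_mod (n - k) 3; omega
  have hsum : t + (t + k) + (t + r) = n := by omega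
  have htrinom := sqrt_two_pi_mul_three_pow_div_le_factorial_div (by omega) (by omega) (by omega)
    hsum (sq_sub_add_sq_sub_add_sq_sub_le hsum₃ hkk (by omega) (by omega))
  have hprefactor := sqrt_div_self_le_sqrt_add_one_div (n := n) (t := t) (by omega)
  have hn₀ : (0 : ℝ) < n := by positivity
  calc √(2 * π) / exp 6 * 3 ^ n * (n : ℝ) ^ (-(3 : ℝ) / 2)
      = √n / n * (√(2 * π) * 3 ^ n / (exp 6 * n)) := by
        rw [show -(3 : ℝ) / 2 = 1 / 2 - 2 by norm_num, rpow_sub hn₀, ← sqrt_eq_rpow, rpow_two]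
        field_simp
    _ ≤ (k + 1 : ℝ) / (k + t + 1) * (n ! / (t ! * (t + k) ! * (t + r) !)) :=
        mul_le_mul hprefactor htrinom (by positivity) (by positivity)
    _ = motzkinCellSummand n t := by
        rw [motzkinCellSummand, ← choose_mul_choose_eq_factorial_div hsum, add_comm k t]; ring

/-- The semisimple dimension of the cell of Mo_n with ⌊√n⌋ through strands is
bounded below by a quantity in Θ(n^{-3/2}·3^n). -/
theorem ssdim_lower_bound :
    ∃ c : ℝ, 0 < c ∧
      ∀ᶠ n : ℕ in Filter.atTop,
        c * 3 ^ n * (n : ℝ) ^ (-(3:ℝ)/2) ≤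
          ∑ t ∈ Finset.range (n+1),
            ((Nat.sqrt n + 1 : ℝ) / ((Nat.sqrt n : ℝ) + (t : ℝ) + 1)) *
              (n.choose t : ℝ) * ((n - t).choose (Nat.sqrt n + t) : ℝ) := by
  refine ⟨√(2 * π) / exp 6, by positivity, ?_⟩
  filter_upwards [eventually_ge_atTop 16] with n hn
  have hmem : (n - Nat.sqrt n) / 3 ∈ range (n + 1) := mem_range.2 (by omega)
  exact (le_motzkinCellSummand_central hn).trans
    (single_le_sum (f := motzkinCellSummand n) (fun t _ => motzkinCellSummand_nonneg n t) hmem)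
end

section
/- The n-th root of the 2n-th Motzkin number converges to 9; i.e. Filter.Tendsto (fun n : ℕ => ((∑ t in Finset.range (2*n+1), (2*n).choose (2*t) * catalan t : ℕ) : ℝ) ^ ((n : ℝ)⁻¹)) Filter.atTop (nhds 9). Equivalently, the cardinality of the Motzkin monoid Mo_n, which equals the 2n-th Motzkin number, grows exponentially with factor 9. -/
/-!
Since `4 ^ t / ((2t + 1)(t + 1)) ≤ catalan t ≤ 4 ^ t`, the Motzkin number `M_m` agrees up to a
polynomial factor with `∑ₜ C(m, 2t) 4 ^ t`, the even part of the binomial expansion of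
`(1 + 2) ^ m`, which is `(3 ^ m + (-1) ^ m) / 2`. So `M_{2n}` is `9 ^ n` up to a polynomial
factor, and polynomial factors disappear under `n`-th roots.
-/

open Finset Filter Topology

theorem one_add_pow_add_one_sub_pow {R : Type*} [CommRing R] (x : R) (m : ℕ) :
    (1 + x) ^ m + (1 - x) ^ m =
      2 * ∑ t ∈ range (m + 1), (m.choose (2 * t) : R) * x ^ (2 * t) := by
  set g : ℕ → R := fun k => (m.choose k : R) * x ^ k * (1 + (-1) ^ k)
  have hbinom : (1 + x) ^ m + (1 - x) ^ m = ∑ k ∈ range (m + 1), g k := by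
    rw [add_comm (1 : R), sub_eq_neg_add, add_pow, add_pow, ← sum_add_distrib]
    refine sum_congr rfl fun k _ => ?_
    simp only [g, one_pow, mul_one, neg_pow x]
    ring
  have hextend : ∑ k ∈ range (m + 1), g k = ∑ k ∈ range (2 * m + 1), g k :=
    sum_subset (range_subset_range.2 (by omega)) fun k _ hk => by
      simp [g, Nat.choose_eq_zero_of_lt (not_lt.1 (mem_range.not.1 hk))]
  have hodd : ∀ k ∈ range (2 * m + 1), k ∉ (2 * ·) '' ↑(range (m + 1)) → g k = 0 := by
    intro k hk hk'
    have : Odd k := by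
      rw [← Nat.not_even_iff_odd]
      rintro ⟨t, rfl⟩
      exact hk' ⟨t, mem_range.2 (by have := mem_range.1 hk; omega), two_mul t⟩
    simp [g, this.neg_one_pow]
  have hevens : ∑ t ∈ range (m + 1), g (2 * t) = ∑ k ∈ range (2 * m + 1), g k :=
    sum_of_injOn (2 * ·) (fun a _ b _ h => by simpa using h)
      (fun t ht => mem_range.2 (by have := mem_range.1 ht; beta_reduce; omega)) hodd fun _ _ => rfl
  rw [hbinom, hextend, ← hevens, mul_sum]
  refine sum_congr rfl fun t _ => ?_
  simp only [g, pow_mul, neg_one_sq, one_pow]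
  ring

theorem two_mul_sum_choose_two_mul_mul_four_pow (m : ℕ) :
    2 * ((∑ t ∈ range (m + 1), m.choose (2 * t) * 4 ^ t : ℕ) : ℤ) = 3 ^ m + (-1) ^ m := by
  have h := one_add_pow_add_one_sub_pow (2 : ℤ) m
  norm_num [pow_mul] at h
  exact_mod_cast h.symm

theorem sum_choose_two_mul_mul_four_pow_le_mul_motzkin (m : ℕ) :
    ∑ t ∈ range (m + 1), m.choose (2 * t) * 4 ^ t ≤ (m + 1) ^ 2 * motzkin m := by
  rw [motzkin, mul_sum]
  refine sum_le_sum fun t _ => ?_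
  rcases lt_or_ge m (2 * t) with hlt | hle
  · simp [Nat.choose_eq_zero_of_lt hlt]
  · calc m.choose (2 * t) * 4 ^ t ≤ m.choose (2 * t) * ((2 * t + 1) * (t + 1) * catalan t) :=
          Nat.mul_le_mul_left _ (four_pow_le_mul_catalan t)
      _ ≤ m.choose (2 * t) * ((m + 1) ^ 2 * catalan t) := by gcongr; nlinarith
      _ = (m + 1) ^ 2 * (m.choose (2 * t) * catalan t) := by ring

theorem three_pow_le_mul_motzkin (m : ℕ) : 3 ^ m ≤ 3 * (m + 1) ^ 2 * motzkin m := by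
  set E := ∑ t ∈ range (m + 1), m.choose (2 * t) * 4 ^ t
  have hsum := two_mul_sum_choose_two_mul_mul_four_pow m
  have hE_pos : 1 ≤ E := by
    simpa using single_le_sum (f := fun t => m.choose (2 * t) * 4 ^ t)
      (fun _ _ => Nat.zero_le _) (mem_range.2 m.succ_pos)
  have hE_le := sum_choose_two_mul_mul_four_pow_le_mul_motzkin m
  have hsign := abs_le.1 (abs_neg_one_pow (α := ℤ) m).le
  have h3E : 3 ^ m ≤ 3 * E := by
    zify at hE_pos ⊢
    linarith
  calc 3 ^ m ≤ 3 * E := h3E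
    _ ≤ 3 * ((m + 1) ^ 2 * motzkin m) := Nat.mul_le_mul_left 3 hE_le
    _ = 3 * (m + 1) ^ 2 * motzkin m := (mul_assoc ..).symm

theorem tendsto_const_mul_pow_rpow_inv {C : ℝ} (hC : 0 < C) (k : ℕ) :
    Tendsto (fun n : ℕ => (C * (n : ℝ) ^ k) ^ (n : ℝ)⁻¹) atTop (𝓝 1) := by
  have hconst : Tendsto (fun n : ℕ => C ^ (n : ℝ)⁻¹) atTop (𝓝 1) := by
    simpa using tendsto_const_nhds.rpow tendsto_inv_atTop_nhds_zero_nat (Or.inl hC.ne')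
  have hroot : Tendsto (fun n : ℕ => (n : ℝ) ^ (n : ℝ)⁻¹) atTop (𝓝 1) := by
    simpa [Function.comp_def, one_div] using tendsto_rpow_div.comp tendsto_natCast_atTop_atTop
  have hprod :
      Tendsto (fun n : ℕ => C ^ (n : ℝ)⁻¹ * ((n : ℝ) ^ (n : ℝ)⁻¹) ^ k) atTop (𝓝 1) := by
    simpa using hconst.mul (hroot.pow k)
  refine hprod.congr fun n => ?_
  rw [Real.mul_rpow hC.le (by positivity), ← Real.rpow_natCast, ← Real.rpow_natCast,
    ← Real.rpow_mul n.cast_nonneg, ← Real.rpow_mul n.cast_nonneg, mul_comm (k : ℝ)]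

theorem tendsto_rpow_inv_of_pow_le_mul_of_le_pow {a : ℕ → ℝ} {r C : ℝ} (k : ℕ) (hr : 0 < r)
    (hC : 0 < C) (hlow : ∀ᶠ n in atTop, r ^ n ≤ C * n ^ k * a n)
    (hup : ∀ᶠ n in atTop, a n ≤ r ^ n) :
    Tendsto (fun n => a n ^ (n : ℝ)⁻¹) atTop (𝓝 r) := by
  have hq : Tendsto (fun n : ℕ => r / (C * (n : ℝ) ^ k) ^ (n : ℝ)⁻¹) atTop (𝓝 r) := by
    simpa [Pi.div_def] using
      tendsto_const_nhds.div (tendsto_const_mul_pow_rpow_inv hC k) one_ne_zero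
  have hroot (n : ℕ) (hn : n ≠ 0) : (r ^ n) ^ (n : ℝ)⁻¹ = r := by
    rw [← Real.rpow_natCast, ← Real.rpow_mul hr.le, mul_inv_cancel₀ (by positivity),
      Real.rpow_one]
  refine tendsto_of_tendsto_of_tendsto_of_le_of_le' hq tendsto_const_nhds ?_ ?_
  all_goals filter_upwards [hlow, hup, eventually_ne_atTop 0] with n hlow hup hn
  · have hq_pos : 0 < C * (n : ℝ) ^ k := by positivity
    calc r / (C * (n : ℝ) ^ k) ^ (n : ℝ)⁻¹ = (r ^ n / (C * n ^ k)) ^ (n : ℝ)⁻¹ := by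
          rw [Real.div_rpow (by positivity) hq_pos.le, hroot n hn]
      _ ≤ a n ^ (n : ℝ)⁻¹ := by
          gcongr
          rwa [div_le_iff₀' hq_pos]
  · have ha : 0 ≤ a n := by
      by_contra! ha
      have : C * n ^ k * a n ≤ 0 := mul_nonpos_of_nonneg_of_nonpos (by positivity) ha.le
      linarith [pow_pos hr n]
    calc a n ^ (n : ℝ)⁻¹ ≤ (r ^ n) ^ (n : ℝ)⁻¹ := by gcongr
      _ = r := hroot n hn

theorem motzkin_two_mul_le_nine_pow (n : ℕ) : motzkin (2 * n) ≤ 9 ^ n :=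
  (motzkin_le_three_pow (2 * n)).trans_eq (by rw [pow_mul]; norm_num)

theorem nine_pow_le_mul_motzkin_two_mul {n : ℕ} (hn : n ≠ 0) :
    9 ^ n ≤ 27 * n ^ 2 * motzkin (2 * n) := by
  have hpoly : 3 * (2 * n + 1) ^ 2 ≤ 27 * n ^ 2 := by
    have : 1 ≤ n := Nat.one_le_iff_ne_zero.2 hn
    nlinarith
  calc 9 ^ n = 3 ^ (2 * n) := by rw [pow_mul]; norm_num
    _ ≤ 3 * (2 * n + 1) ^ 2 * motzkin (2 * n) := three_pow_le_mul_motzkin (2 * n)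
    _ ≤ 27 * n ^ 2 * motzkin (2 * n) := Nat.mul_le_mul_right _ hpoly

/-- The n-th root of the 2n-th Motzkin number converges to 9. -/
theorem motzkin_two_n_root_tendsto_nine :
    Filter.Tendsto
      (fun n : ℕ =>
        ((∑ t ∈ Finset.range (2*n+1), (2*n).choose (2*t) * catalan t : ℕ) : ℝ) ^ ((n : ℝ)⁻¹))
      Filter.atTop (nhds 9) := by
  change Tendsto (fun n : ℕ => (motzkin (2 * n) : ℝ) ^ (n : ℝ)⁻¹) atTop (𝓝 9)
  refine tendsto_rpow_inv_of_pow_le_mul_of_le_pow 2 (by norm_num) (by norm_num : (0 : ℝ) < 27)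
    ?_ (.of_forall fun n => by exact_mod_cast motzkin_two_mul_le_nine_pow n)
  filter_upwards [eventually_ne_atTop 0] with n hn
  exact_mod_cast nine_pow_le_mul_motzkin_two_mul hn
end

section
/- For every n : ℕ, one has in ℚ: ∑ t in Finset.range (2*n+1), ((2*n).choose (2*t) * catalan t : ℚ) = ∑ k in Finset.range (n+1), (∑ t in Finset.range (n+1), ((k+1 : ℚ)/(k+t+1)) * (n.choose (k+2*t)) * ((k+2*t).choose t))^2; i.e. the 2n-th Motzkin number equals the sum over k of the squares of the number of left cells with k through strands in the Motzkin monoid Mo_n. -/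
/-!
`motzkinTriangle n k` counts Motzkin paths of length `n` from height `0` to height `k`, so that
`motzkinTriangle (2 * n) 0` is the Motzkin number `M_{2n}`. Choosing which `k + 2t` of the `n` steps
are not flat, and counting the remaining up/down words staying nonnegative by the ballot number
`(k + 1) / (k + t + 1) * C(k + 2t, t)`, identifies the inner sum over `t` with
`motzkinTriangle n k`. Splitting a path of length `2n` back to height `0` at its midpoint gives
`M_{2n} = ∑_k (motzkinTriangle n k)^2`; formally this is an induction moving one step from one
factor to the other, which works because the one-step transition matrix is symmetric.
-/

open Finset

noncomputable def ballotNumber (k t : ℕ) : ℚ := (k + 1) / (k + t + 1) * (k + 2 * t).choose t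

@[simp]
lemma ballotNumber_zero_right (k : ℕ) : ballotNumber k 0 = 1 := by
  simp [ballotNumber]
  positivity

lemma ballotNumber_succ_right (k t : ℕ) :
    ballotNumber k (t + 1) = (k + 2 * t + 2).choose (t + 1) - (k + 2 * t + 2).choose t := by
  have h : ((k + 2 * t + 2).choose (t + 1) : ℚ) * (t + 1) =
      (k + 2 * t + 2).choose t * (k + t + 2) := by
    have := Nat.choose_succ_right_eq (k + 2 * t + 2) t
    rw [show k + 2 * t + 2 - t = k + t + 2 by omega] at this
    exact_mod_cast this
  rw [ballotNumber, show k + 2 * (t + 1) = k + 2 * t + 2 by ring]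
  push_cast
  field_simp
  linear_combination -h

lemma ballotNumber_succ_succ (k t : ℕ) :
    ballotNumber (k + 1) (t + 1) = ballotNumber k (t + 1) + ballotNumber (k + 2) t := by
  rcases t with _ | s
  · simp [ballotNumber_succ_right]
    ring
  · simp only [ballotNumber_succ_right]
    rw [show k + 1 + 2 * (s + 1) + 2 = (k + 2 * (s + 1) + 2) + 1 by ring,
      show k + 2 + 2 * s + 2 = k + 2 * (s + 1) + 2 by ring,
      Nat.choose_succ_succ' (k + 2 * (s + 1) + 2) (s + 1),
      Nat.choose_succ_succ' (k + 2 * (s + 1) + 2) s]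
    push_cast
    ring

lemma ballotNumber_zero_succ (t : ℕ) : ballotNumber 0 (t + 1) = ballotNumber 1 t := by
  rcases t with _ | s
  · simp [ballotNumber_succ_right]
    norm_num
  · simp only [ballotNumber_succ_right]
    rw [show 0 + 2 * (s + 1) + 2 = (2 * s + 3) + 1 by ring, show 1 + 2 * s + 2 = 2 * s + 3 by ring,
      Nat.choose_succ_succ' (2 * s + 3) (s + 1), Nat.choose_succ_succ' (2 * s + 3) s,
      Nat.choose_symm_of_eq_add (show 2 * s + 3 = (s + 1 + 1) + (s + 1) by ring)]
    push_cast
    ring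

lemma ballotNumber_zero_left (t : ℕ) : ballotNumber 0 t = catalan t := by
  have h : ((t + 1 : ℕ) : ℚ) * catalan t = (2 * t).choose t := by
    rw [← Nat.cast_mul, succ_mul_catalan_eq_centralBinom, Nat.centralBinom_eq_two_mul_choose]
  rw [ballotNumber, zero_add, ← h]
  push_cast
  field_simp
  ring

def motzkinTriangle : ℕ → ℕ → ℕ
  | 0, 0 => 1
  | 0, _ + 1 => 0
  | n + 1, 0 => motzkinTriangle n 0 + motzkinTriangle n 1
  | n + 1, k + 1 => motzkinTriangle n k + motzkinTriangle n (k + 1) + motzkinTriangle n (k + 2)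

lemma motzkinTriangle_eq_zero_of_lt {n k : ℕ} (h : n < k) : motzkinTriangle n k = 0 := by
  induction n generalizing k with
  | zero => obtain ⟨k, rfl⟩ := Nat.exists_eq_succ_of_ne_zero h.ne'; rfl
  | succ n ih =>
    obtain ⟨k, rfl⟩ := Nat.exists_eq_succ_of_ne_zero (n.succ_pos.trans h).ne'
    simp only [motzkinTriangle, ih (show n < k by omega), ih (show n < k + 1 by omega),
      ih (show n < k + 2 by omega)]

lemma sum_range_motzkinTriangle_succ_mul_eq_sum_mul_succ {a b M : ℕ} (ha : a < M)
    (hb : b < M) :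
    ∑ k ∈ range M, motzkinTriangle (a + 1) k * motzkinTriangle b k =
      ∑ k ∈ range M, motzkinTriangle a k * motzkinTriangle (b + 1) k := by
  obtain ⟨N, rfl⟩ := Nat.exists_eq_succ_of_ne_zero (Nat.zero_lt_of_lt ha).ne'
  have shift (f g : ℕ → ℕ) (hf : f (N + 1) = 0) :
      ∑ k ∈ range N, f (k + 2) * g (k + 1) + f 1 * g 0 = ∑ k ∈ range N, f (k + 1) * g k := by
    rw [← sum_range_succ' (fun k => f (k + 1) * g k), sum_range_succ, hf, zero_mul, add_zero]
  have h1 := shift (motzkinTriangle a) (motzkinTriangle b) (motzkinTriangle_eq_zero_of_lt ha)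
  have h2 := shift (motzkinTriangle b) (motzkinTriangle a) (motzkinTriangle_eq_zero_of_lt hb)
  simp only [sum_range_succ' _ N, motzkinTriangle, add_mul, mul_add, sum_add_distrib]
  simp only [mul_comm (motzkinTriangle b _)] at h2
  omega

lemma motzkinTriangle_eq_sum_choose_mul_ballotNumber (n k M : ℕ) (hM : n < M) :
    (motzkinTriangle n k : ℚ) = ∑ t ∈ range M, (n.choose (k + 2 * t) : ℚ) * ballotNumber k t := by
  induction n generalizing k M with
  | zero =>
    obtain ⟨M, rfl⟩ : ∃ M', M = M' + 1 := ⟨M - 1, by omega⟩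
    rw [sum_range_succ']
    rcases k with _ | k <;> simp [motzkinTriangle, Nat.choose_eq_zero_of_lt]
  | succ n ih =>
    obtain ⟨M, rfl⟩ : ∃ M', M = M' + 1 := ⟨M - 1, by omega⟩
    have shift (j t : ℕ) : j + 2 * (t + 1) = j + 2 + 2 * t := by ring
    rcases k with _ | k
    · have pascal (t : ℕ) :
          (n + 1).choose (0 + 2 * (t + 1)) = n.choose (1 + 2 * t) + n.choose (0 + 2 * (t + 1)) := by
        rw [show 0 + 2 * (t + 1) = 1 + 2 * t + 1 by ring, Nat.choose_succ_succ']
      rw [motzkinTriangle, Nat.cast_add, ih 0 (M + 1) (by omega), ih 1 M (by omega),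
        sum_range_succ',
        sum_range_succ' (fun t => ((n + 1).choose (0 + 2 * t) : ℚ) * ballotNumber 0 t)]
      simp only [pascal, Nat.cast_add, add_mul, sum_add_distrib, ballotNumber_zero_succ]
      simp only [zero_add, mul_zero, Nat.choose_zero_right, Nat.cast_one, ballotNumber_zero_right,
        mul_one]
      abel
    · have pascal (t : ℕ) :
          (n + 1).choose (k + 1 + 2 * t) = n.choose (k + 2 * t) + n.choose (k + 1 + 2 * t) := by
        rw [Nat.add_right_comm, Nat.choose_succ_succ', Nat.add_right_comm]
      rw [motzkinTriangle, Nat.cast_add, Nat.cast_add, ih k (M + 1) (by omega),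
        ih (k + 1) (M + 1) (by omega), ih (k + 2) M (by omega)]
      simp only [pascal, Nat.cast_add, add_mul, sum_add_distrib]
      rw [sum_range_succ' (fun t => (n.choose (k + 2 * t) : ℚ) * ballotNumber k t),
        sum_range_succ' (fun t => (n.choose (k + 2 * t) : ℚ) * ballotNumber (k + 1) t)]
      simp only [shift, mul_zero, add_zero, ballotNumber_zero_right, mul_one]
      simp only [ballotNumber_succ_succ, mul_add, sum_add_distrib]
      abel

lemma sum_range_motzkinTriangle_mul_of_lt {a b M : ℕ} (h : a + b < M) :
    ∑ k ∈ range M, motzkinTriangle a k * motzkinTriangle b k = motzkinTriangle (a + b) 0 := by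
  induction b generalizing a with
  | zero =>
    obtain ⟨M, rfl⟩ : ∃ M', M = M' + 1 := ⟨M - 1, by omega⟩
    simp [sum_range_succ', motzkinTriangle]
  | succ b ih =>
    rw [← sum_range_motzkinTriangle_succ_mul_eq_sum_mul_succ (by omega) (by omega), ih (by omega),
      Nat.add_right_comm, Nat.add_assoc]

lemma sum_range_motzkinTriangle_mul (a b : ℕ) :
    ∑ k ∈ range (a + 1), motzkinTriangle a k * motzkinTriangle b k = motzkinTriangle (a + b) 0 := by
  rw [← sum_range_motzkinTriangle_mul_of_lt (M := a + b + 1) (by omega)]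
  refine sum_subset (range_subset_range.mpr (by omega)) fun k _ hk => ?_
  rw [motzkinTriangle_eq_zero_of_lt (by simpa using hk), zero_mul]

/-- The 2n-th Motzkin number equals the sum over k of the squares of the number of
left cells with k through strands in the Motzkin monoid Mo_n. -/
theorem motzkin_eq_sum_of_squares_of_cell_sizes (n : ℕ) :
    ∑ t ∈ Finset.range (2*n+1), ((2*n).choose (2*t) * catalan t : ℚ) =
      ∑ k ∈ Finset.range (n+1),
        (∑ t ∈ Finset.range (n+1),
          ((k+1 : ℚ)/((k : ℚ)+(t : ℚ)+1)) * (n.choose (k+2*t) : ℚ) *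
            ((k+2*t).choose t : ℚ))^2 := by
  have motzkin : ∑ t ∈ range (2 * n + 1), ((2 * n).choose (2 * t) * catalan t : ℚ) =
      motzkinTriangle (2 * n) 0 := by
    simp [motzkinTriangle_eq_sum_choose_mul_ballotNumber (2 * n) 0 (2 * n + 1) (by omega),
      ballotNumber_zero_left]
  have cells (k : ℕ) : ∑ t ∈ range (n + 1), ((k + 1 : ℚ) / ((k : ℚ) + (t : ℚ) + 1)) *
      (n.choose (k + 2 * t) : ℚ) * ((k + 2 * t).choose t : ℚ) = motzkinTriangle n k := by
    rw [motzkinTriangle_eq_sum_choose_mul_ballotNumber n k (n + 1) n.lt_succ_self]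
    exact sum_congr rfl fun t _ => by rw [ballotNumber]; ring
  rw [motzkin, two_mul, ← sum_range_motzkinTriangle_mul]
  simp [cells, sq]
end

section
/- For every n : ℕ, with s := Nat.sqrt n, one has in ℚ: ∑ t in Finset.range (n+1), ((s+1 : ℚ)/(s+t+1)) * (n.choose (s+2*t)) * ((s+2*t).choose t) = ∑ t in Finset.range (n+1), ((s+1 : ℚ)/(s+t+1)) * (n.choose t) * ((n - t).choose (s+t)), where n − t is truncated subtraction. -/
/-! The two sums agree termwise: choosing a `(k + 2t)`-subset of `[n]` and then a `t`-subset of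
it is the same as choosing the `t`-subset first and then `k + t` of the remaining `n - t`
elements (`Nat.choose_mul`). -/

theorem Nat.choose_add_two_mul_mul_choose (n k t : ℕ) :
    n.choose (k + 2 * t) * (k + 2 * t).choose t = n.choose t * (n - t).choose (k + t) := by
  rw [Nat.choose_mul (by omega), show k + 2 * t - t = k + t by omega]

/-- Rewriting of the semisimple dimension of the cell with ⌊√n⌋ through strands. -/
theorem cell_size_rewrite (n : ℕ) :
    ∑ t ∈ Finset.range (n+1),
        ((Nat.sqrt n + 1 : ℚ)/((Nat.sqrt n : ℚ)+(t : ℚ)+1)) *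
          (n.choose (Nat.sqrt n + 2*t) : ℚ) * ((Nat.sqrt n + 2*t).choose t : ℚ) =
      ∑ t ∈ Finset.range (n+1),
        ((Nat.sqrt n + 1 : ℚ)/((Nat.sqrt n : ℚ)+(t : ℚ)+1)) *
          (n.choose t : ℚ) * ((n - t).choose (Nat.sqrt n + t) : ℚ) := by
  refine Finset.sum_congr rfl fun t _ => ?_
  rw [mul_assoc, mul_assoc, ← Nat.cast_mul, ← Nat.cast_mul,
    Nat.choose_add_two_mul_mul_choose]
end

section
/- Filter.Tendsto (fun n : ℕ => ((n.choose (n/3) * (n - n/3).choose (Nat.sqrt n + n/3) : ℕ) : ℝ) ^ ((n : ℝ)⁻¹)) Filter.atTop (nhds 3), where n/3 denotes integer (floor) division and n − n/3 truncated subtraction; i.e. the n-th root of the dominant term (at t = ⌊n/3⌋) of the semisimple-dimension sum ∑_t C(n,t)·C(n−t, ⌊√n⌋+t) converges to 3. -/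
open Nat Finset

lemma bstep_up (n k : ℕ) (h : 3*k + 2 ≤ n) :
    n.choose k * 2^(n-k) ≤ n.choose (k+1) * 2^(n-(k+1)) := by
  apply Nat.le_of_mul_le_mul_right _ (Nat.succ_pos k)
  have hsplit : n - k = (n - (k+1)) + 1 := by omega
  calc n.choose k * 2^(n-k) * (k+1)
      = n.choose k * (2*(k+1)) * 2^(n-(k+1)) := by rw [hsplit, pow_succ]; ring
    _ ≤ n.choose k * (n-k) * 2^(n-(k+1)) := by
        have : 2*(k+1) ≤ n - k := by omega
        exact Nat.mul_le_mul_right _ (Nat.mul_le_mul_left _ this)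
    _ = n.choose (k+1) * (k+1) * 2^(n-(k+1)) := by rw [Nat.choose_succ_right_eq]
    _ = n.choose (k+1) * 2^(n-(k+1)) * (k+1) := by ring

lemma bstep_down (n k : ℕ) (h : n ≤ 3*k + 2) :
    n.choose (k+1) * 2^(n-(k+1)) ≤ n.choose k * 2^(n-k) := by
  rcases le_or_gt (k+1) n with hk | hk
  · apply Nat.le_of_mul_le_mul_right _ (Nat.succ_pos k)
    have hsplit : n - k = (n - (k+1)) + 1 := by omega
    calc n.choose (k+1) * 2^(n-(k+1)) * (k+1)
        = n.choose (k+1) * (k+1) * 2^(n-(k+1)) := by ring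
      _ = n.choose k * (n-k) * 2^(n-(k+1)) := by rw [Nat.choose_succ_right_eq]
      _ ≤ n.choose k * (2*(k+1)) * 2^(n-(k+1)) := by
          have : n - k ≤ 2*(k+1) := by omega
          exact Nat.mul_le_mul_right _ (Nat.mul_le_mul_left _ this)
      _ = n.choose k * 2^(n-k) * (k+1) := by rw [hsplit, pow_succ]; ring
  · rw [Nat.choose_eq_zero_of_lt hk]; simp

lemma b_chain_up (n k j : ℕ) (h : 3*(k+j) ≤ n) :
    n.choose k * 2^(n-k) ≤ n.choose (k+j) * 2^(n-(k+j)) := by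
  induction j with
  | zero => simp
  | succ j ih =>
    calc n.choose k * 2^(n-k) ≤ n.choose (k+j) * 2^(n-(k+j)) := ih (by omega)
      _ ≤ _ := by
        rw [show k + (j+1) = (k+j) + 1 by ring]
        exact bstep_up n (k+j) (by omega)

lemma b_chain_down (n k j : ℕ) (h : n ≤ 3*k + 2) :
    n.choose (k+j) * 2^(n-(k+j)) ≤ n.choose k * 2^(n-k) := by
  induction j with
  | zero => simp
  | succ j ih =>
    calc n.choose (k+(j+1)) * 2^(n-(k+(j+1)))
        ≤ n.choose (k+j) * 2^(n-(k+j)) := by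
          rw [show k + (j+1) = (k+j) + 1 by ring]
          exact bstep_down n (k+j) (by omega)
      _ ≤ _ := ih

lemma b_max (n k : ℕ) :
    n.choose k * 2^(n-k) ≤ n.choose (n/3) * 2^(n - n/3) := by
  have h3 : 3 * (n/3) ≤ n := by omega
  have h3' : n ≤ 3 * (n/3) + 2 := by omega
  rcases le_or_gt k (n/3) with hk | hk
  · have := b_chain_up n k (n/3 - k) (by omega)
    rwa [show k + (n/3 - k) = n/3 by omega] at this
  · have := b_chain_down n (n/3) (k - n/3) (by omega)
    rwa [show n/3 + (k - n/3) = k by omega] at this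

lemma sum3 (n : ℕ) : 3^n ≤ (n+1) * (n.choose (n/3) * 2^(n - n/3)) := by
  have h : (3:ℕ)^n = ∑ k ∈ range (n+1), 2^(n-k) * n.choose k := by
    have := add_pow 1 2 n (R := ℕ)
    simpa [one_pow] using this
  rw [h]
  calc ∑ k ∈ range (n+1), 2^(n-k) * n.choose k
      ≤ ∑ _k ∈ range (n+1), n.choose (n/3) * 2^(n - n/3) := by
        apply Finset.sum_le_sum
        intro k _
        rw [mul_comm]; exact b_max n k
    _ = (n+1) * (n.choose (n/3) * 2^(n - n/3)) := by
        rw [Finset.sum_const, Finset.card_range, smul_eq_mul]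

lemma sum3' (n : ℕ) : n.choose (n/3) * 2^(n - n/3) ≤ 3^n := by
  have h : (3:ℕ)^n = ∑ k ∈ range (n+1), 2^(n-k) * n.choose k := by
    have := add_pow 1 2 n (R := ℕ)
    simpa [one_pow] using this
  rw [h, mul_comm]
  exact Finset.single_le_sum (f := fun k => 2^(n-k) * n.choose k)
    (fun i _ => Nat.zero_le _) (Finset.mem_range.mpr (by omega))

lemma central (N : ℕ) : 2^N ≤ (N+1) * N.choose (N/2) := by
  rw [← Nat.sum_range_choose]
  calc ∑ k ∈ range (N+1), N.choose k
      ≤ ∑ _k ∈ range (N+1), N.choose (N/2) :=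
        Finset.sum_le_sum fun k _ => Nat.choose_le_middle k N
    _ = (N+1) * N.choose (N/2) := by
        rw [Finset.sum_const, Finset.card_range, smul_eq_mul]

lemma shift_step (N j : ℕ) (h : 5*j + 5 ≤ 4*N) : N.choose j ≤ 4 * N.choose (j+1) := by
  have hj : j + 1 ≤ N := by omega
  apply Nat.le_of_mul_le_mul_right _ (Nat.succ_pos j)
  calc N.choose j * (j+1) ≤ N.choose j * (4*(N-j)) := by
        apply Nat.mul_le_mul_left; omega
    _ = 4 * (N.choose j * (N-j)) := by ring
    _ = 4 * (N.choose (j+1) * (j+1)) := by rw [← Nat.choose_succ_right_eq]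
    _ = 4 * N.choose (j+1) * (j+1) := by ring

lemma shift (N k d : ℕ) (h : 5*(k+d) ≤ 4*N) : N.choose k ≤ 4^d * N.choose (k+d) := by
  induction d with
  | zero => simp
  | succ d ih =>
    calc N.choose k ≤ 4^d * N.choose (k+d) := ih (by omega)
      _ ≤ 4^d * (4 * N.choose (k+d+1)) :=
          Nat.mul_le_mul_left _ (shift_step N (k+d) (by omega))
      _ = 4^(d+1) * N.choose (k+(d+1)) := by rw [show k+(d+1) = k+d+1 by ring, pow_succ]; ring

lemma main_lower (n : ℕ) (hn : 25 ≤ n) :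
    3^n ≤ (n+1)^2 * 4^(Nat.sqrt n) *
      (n.choose (n/3) * (n - n/3).choose (Nat.sqrt n + n/3)) := by
  set t := n/3 with ht
  set N := n - t with hN
  set s := Nat.sqrt n + t with hs
  have hsq1 : Nat.sqrt n * Nat.sqrt n ≤ n := (by simpa [pow_two] using Nat.sqrt_le' n)
  have hsq5 : 5 ≤ Nat.sqrt n := Nat.le_sqrt'.mpr (by omega)
  have ht3 : 3 * t ≤ n := by omega
  have ht3' : n ≤ 3 * t + 2 := by omega
  have hm2 : 2 * (N/2) ≤ N := by omega
  have hm2' : N ≤ 2 * (N/2) + 1 := by omega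
  have hms : N/2 ≤ s := by omega
  have hd : s - N/2 ≤ Nat.sqrt n := by omega
  have h5 : 5 * s ≤ 4 * N := by
    have : 5 * Nat.sqrt n ≤ Nat.sqrt n * Nat.sqrt n := Nat.mul_le_mul_right _ hsq5
    omega
  calc 3^n ≤ (n+1) * (n.choose t * 2^(n-t)) := sum3 n
    _ = (n+1) * (n.choose t * 2^N) := rfl
    _ ≤ (n+1) * (n.choose t * ((N+1) * N.choose (N/2))) := by
        apply Nat.mul_le_mul_left
        exact Nat.mul_le_mul_left _ (central N)
    _ ≤ (n+1) * (n.choose t * ((N+1) * (4^(s - N/2) * N.choose (N/2 + (s - N/2))))) := by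
        apply Nat.mul_le_mul_left
        apply Nat.mul_le_mul_left
        apply Nat.mul_le_mul_left
        exact shift N (N/2) (s - N/2) (by omega)
    _ = (n+1) * (N+1) * 4^(s - N/2) * (n.choose t * N.choose s) := by
        rw [show N/2 + (s - N/2) = s by omega]; ring
    _ ≤ (n+1)^2 * 4^(Nat.sqrt n) * (n.choose t * N.choose s) := by
        apply Nat.mul_le_mul_right
        have h1 : N + 1 ≤ n + 1 := by omega
        calc (n+1) * (N+1) * 4^(s - N/2) ≤ (n+1) * (n+1) * 4^(Nat.sqrt n) :=
              Nat.mul_le_mul (Nat.mul_le_mul_left _ h1)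
                (Nat.pow_le_pow_right (by norm_num) hd)
          _ = (n+1)^2 * 4^(Nat.sqrt n) := by ring

lemma main_upper (n : ℕ) :
    n.choose (n/3) * (n - n/3).choose (Nat.sqrt n + n/3) ≤ 3^n := by
  calc n.choose (n/3) * (n - n/3).choose (Nat.sqrt n + n/3)
      ≤ n.choose (n/3) * 2^(n - n/3) := by
        apply Nat.mul_le_mul_left
        calc (n - n/3).choose (Nat.sqrt n + n/3)
            ≤ ∑ k ∈ range ((n - n/3)+1), (n - n/3).choose k := by
              rcases le_or_gt (Nat.sqrt n + n/3) (n - n/3) with h | h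
              · exact Finset.single_le_sum (fun i _ => Nat.zero_le _)
                  (Finset.mem_range.mpr (by omega))
              · rw [Nat.choose_eq_zero_of_lt h]; exact Nat.zero_le _
          _ = 2^(n - n/3) := Nat.sum_range_choose _
    _ ≤ 3^n := sum3' n

open Filter Real

lemma log_add_one_div_tendsto :
    Tendsto (fun x : ℝ => Real.log (x+1) / x) atTop (nhds 0) := by
  have h1 : Tendsto (fun x : ℝ => Real.log x / x) atTop (nhds 0) :=
    Real.isLittleO_log_id_atTop.tendsto_div_nhds_zero
  have h2 : Tendsto (fun x : ℝ => Real.log (x+1) / (x+1)) atTop (nhds 0) :=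
    h1.comp (tendsto_atTop_add_const_right _ 1 tendsto_id)
  have h3 : Tendsto (fun x : ℝ => (x+1)/x) atTop (nhds 1) := by
    have h : Tendsto (fun x : ℝ => 1 + x⁻¹) atTop (nhds (1+0)) :=
      tendsto_const_nhds.add tendsto_inv_atTop_zero
    rw [add_zero] at h
    refine Tendsto.congr' ?_ h
    filter_upwards [eventually_gt_atTop (0:ℝ)] with x hx
    field_simp
  have h4 := h2.mul h3
  rw [zero_mul] at h4
  refine Tendsto.congr' ?_ h4
  filter_upwards [eventually_gt_atTop (0:ℝ)] with x hx
  have hx1 : x + 1 ≠ 0 := by positivity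
  field_simp

lemma sqrt_div_tendsto :
    Tendsto (fun x : ℝ => Real.sqrt x / x) atTop (nhds 0) := by
  have h := tendsto_rpow_neg_atTop (y := (1:ℝ)/2) (by norm_num)
  refine Tendsto.congr' ?_ h
  filter_upwards [eventually_gt_atTop (0:ℝ)] with x hx
  rw [Real.sqrt_eq_rpow, show x ^ (-(1/2):ℝ) = x ^ ((1/2:ℝ) - 1) by norm_num,
    Real.rpow_sub hx, Real.rpow_one]

/-- The n-th root of the dominant term C(n, n/3)·C(n − n/3, √n + n/3) converges to 3. -/
theorem dominant_term_root_tendsto_three :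
    Filter.Tendsto
      (fun n : ℕ =>
        ((n.choose (n/3) * (n - n/3).choose (Nat.sqrt n + n/3) : ℕ) : ℝ) ^ ((n : ℝ)⁻¹))
      Filter.atTop (nhds 3) := by
  set f : ℕ → ℝ := fun n => ((n.choose (n/3) * (n - n/3).choose (Nat.sqrt n + n/3) : ℕ) : ℝ) with hf
  have hfnonneg : ∀ n, 0 ≤ f n := fun n => Nat.cast_nonneg _
  set A : ℕ → ℝ := fun n => ((n:ℝ)+1)^2 * (4:ℝ) ^ (Real.sqrt n) with hA
  have hApos : ∀ n, 0 < A n := fun n => by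
    have : (0:ℝ) < (4:ℝ) ^ (Real.sqrt n) := Real.rpow_pos_of_pos (by norm_num) _
    positivity
  set L : ℕ → ℝ := fun n => 3 * ((A n) ^ ((n:ℝ)⁻¹))⁻¹ with hL
  have hLtend : Tendsto L atTop (nhds 3) := by
    have hexp : Tendsto (fun n : ℕ =>
        (2 * Real.log ((n:ℝ)+1) + Real.sqrt n * Real.log 4) * ((n:ℝ)⁻¹)) atTop (nhds 0) := by
      have hA1 : Tendsto (fun n : ℕ => Real.log ((n:ℝ)+1) / n) atTop (nhds 0) :=
        log_add_one_div_tendsto.comp tendsto_natCast_atTop_atTop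
      have hB1 : Tendsto (fun n : ℕ => Real.sqrt (n:ℝ) / n) atTop (nhds 0) :=
        sqrt_div_tendsto.comp tendsto_natCast_atTop_atTop
      have h := (hA1.const_mul 2).add (hB1.mul_const (Real.log 4))
      rw [show (2:ℝ) * 0 + 0 * Real.log 4 = 0 by ring] at h
      refine Tendsto.congr (fun n => ?_) h
      rw [div_eq_mul_inv, div_eq_mul_inv]; ring
    have hB : Tendsto (fun n : ℕ => (A n) ^ ((n:ℝ)⁻¹)) atTop (nhds 1) := by
      have heq : ∀ n : ℕ, (A n) ^ ((n:ℝ)⁻¹) =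
          Real.exp ((2 * Real.log ((n:ℝ)+1) + Real.sqrt n * Real.log 4) * ((n:ℝ)⁻¹)) := by
        intro n
        rw [Real.rpow_def_of_pos (hApos n)]
        congr 1
        rw [hA]
        rw [Real.log_mul (by positivity) (Real.rpow_pos_of_pos (by norm_num) _).ne',
          Real.log_pow, Real.log_rpow (by norm_num)]
        push_cast; ring
      have := (Real.continuous_exp.tendsto 0).comp hexp
      rw [Real.exp_zero] at this
      exact Tendsto.congr (fun n => (heq n).symm) this
    have h3 : Tendsto (fun n => ((A n) ^ ((n:ℝ)⁻¹))⁻¹) atTop (nhds 1⁻¹) := hB.inv₀ one_ne_zero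
    rw [inv_one] at h3
    have h4 := h3.const_mul (3:ℝ)
    rw [mul_one] at h4
    exact h4
  have hub : ∀ᶠ n in atTop, f n ^ ((n:ℝ)⁻¹) ≤ 3 := by
    filter_upwards [eventually_ge_atTop 1] with n hn
    have hn0 : (n:ℝ) ≠ 0 := Nat.cast_ne_zero.mpr (by omega)
    have h1 : f n ≤ (3:ℝ)^(n:ℕ) := by simp only [hf]; exact_mod_cast main_upper n
    calc f n ^ ((n:ℝ)⁻¹) ≤ ((3:ℝ)^(n:ℕ)) ^ ((n:ℝ)⁻¹) :=
          Real.rpow_le_rpow (hfnonneg n) h1 (by positivity)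
      _ = 3 := by
          rw [← Real.rpow_natCast 3 n, ← Real.rpow_mul (by norm_num),
            mul_inv_cancel₀ hn0, Real.rpow_one]
  have hlb : ∀ᶠ n in atTop, L n ≤ f n ^ ((n:ℝ)⁻¹) := by
    filter_upwards [eventually_ge_atTop 25] with n hn
    have hn0 : (n:ℝ) ≠ 0 := Nat.cast_ne_zero.mpr (by omega)
    have h1 : (3:ℝ)^(n:ℕ) ≤ ((n:ℝ)+1)^2 * (4:ℝ)^(Nat.sqrt n : ℕ) * f n := by
      have := main_lower n hn
      simp only [hf]
      exact_mod_cast this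
    have h2 : (4:ℝ)^(Nat.sqrt n:ℕ) ≤ (4:ℝ)^(Real.sqrt n) := by
      rw [← Real.rpow_natCast 4 (Nat.sqrt n)]
      exact (Real.rpow_le_rpow_left_iff (by norm_num)).mpr Real.nat_sqrt_le_real_sqrt
    have h3 : (3:ℝ)^(n:ℕ) ≤ A n * f n := by
      refine h1.trans ?_
      have hh : ((n:ℝ)+1)^2 * (4:ℝ)^(Nat.sqrt n:ℕ) ≤ A n :=
        mul_le_mul_of_nonneg_left h2 (by positivity)
      exact mul_le_mul_of_nonneg_right hh (hfnonneg n)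
    have h4 : (3:ℝ)^(n:ℕ) / A n ≤ f n := by
      rw [div_le_iff₀ (hApos n)]
      calc (3:ℝ)^(n:ℕ) ≤ A n * f n := h3
        _ = f n * A n := by ring
    have h5 := Real.rpow_le_rpow (by positivity) h4 (inv_nonneg.mpr (Nat.cast_nonneg n))
    calc L n = ((3:ℝ)^(n:ℕ) / A n) ^ ((n:ℝ)⁻¹) := by
          rw [Real.div_rpow (by positivity) (hApos n).le,
            ← Real.rpow_natCast 3 n, ← Real.rpow_mul (by norm_num),
            mul_inv_cancel₀ hn0, Real.rpow_one, div_eq_mul_inv]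
      _ ≤ f n ^ ((n:ℝ)⁻¹) := h5
  exact tendsto_of_tendsto_of_tendsto_of_le_of_le' hLtend tendsto_const_nhds hlb hub
end
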